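/- arXiv:2510.26527 — 2 statements merged into one kernel-verified Lean document; each statement's English description precedes it below -/
import Mathlib

section
/- Let N, T1, T2, T2', β be positive real numbers and L1, L1', L2' positive real numbers with L1' > L2' > L1. If either T2'/T1 < L2'·(1/L1 − 1/L1') or T2'/T2 < β·(L2'/L1 − 1), then the three-model inference time is strictly smaller than the two-model inference time, i.e. (N/L1')·T1 + (N/L2')·T2' + β·(N/L2')·T2 < (N/L1)·T1 + β·(N/L1)·T2. -/
/-!
Inserting the intermediate model saves `N / L2'` times
`T1 * L2' * (1 / L1 - 1 / L1') + β * T2 * (L2' / L1 - 1) - T2'`: the first two terms are the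
target and draft time saved per intermediate-model step, and both are nonnegative because
`L1 < L2' < L1'`. Each of the two conditions says that `T2'` is already below one of these terms.
-/

section SpeculativeDecoding

variable (N T1 T2 T2' β L1 L1' L2' : ℝ)

theorem two_model_time_sub_three_model_time (hL2' : L2' ≠ 0) :
    (N / L1 * T1 + β * (N / L1) * T2) - (N / L1' * T1 + N / L2' * T2' + β * (N / L2') * T2)
      = N / L2' * (T1 * (L2' * (1 / L1 - 1 / L1')) + T2 * (β * (L2' / L1 - 1)) - T2') := by
  field_simp
  ring

theorem three_model_time_lt_two_model_time_iff (hN : 0 < N) (hL2' : 0 < L2') :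
    N / L1' * T1 + N / L2' * T2' + β * (N / L2') * T2 < N / L1 * T1 + β * (N / L1) * T2 ↔
      T2' < T1 * (L2' * (1 / L1 - 1 / L1')) + T2 * (β * (L2' / L1 - 1)) := by
  rw [← sub_pos, two_model_time_sub_three_model_time _ _ _ _ _ _ _ _ hL2'.ne',
    mul_pos_iff_of_pos_left (by positivity), sub_pos]

end SpeculativeDecoding

theorem three_model_faster_than_two_model_general
    (N T1 T2 T2' β L1 L1' L2' : ℝ)
    (hN : 0 < N) (hT1 : 0 < T1) (hT2 : 0 < T2) (hβ : 0 < β)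
    (hL1 : 0 < L1) (hL2' : 0 < L2')
    (hord1 : L2' < L1') (hord2 : L1 < L2')
    (hcond : T2' / T1 < L2' * (1 / L1 - 1 / L1') ∨ T2' / T2 < β * (L2' / L1 - 1)) :
    N / L1' * T1 + N / L2' * T2' + β * (N / L2') * T2
      < N / L1 * T1 + β * (N / L1) * T2 := by
  have htarget_gain : 0 ≤ T1 * (L2' * (1 / L1 - 1 / L1')) := by
    have := one_div_lt_one_div_of_lt hL1 (hord2.trans hord1)
    exact mul_nonneg hT1.le (mul_nonneg hL2'.le (sub_nonneg.2 this.le))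
  have hdraft_gain : 0 ≤ T2 * (β * (L2' / L1 - 1)) := by
    have := (one_lt_div hL1).2 hord2
    exact mul_nonneg hT2.le (mul_nonneg hβ.le (sub_nonneg.2 this.le))
  refine (three_model_time_lt_two_model_time_iff _ _ _ _ _ _ _ _ hN hL2').2 ?_
  rcases hcond with h | h
  · exact lt_add_of_lt_of_nonneg ((div_lt_iff₀' hT1).1 h) hdraft_gain
  · exact lt_add_of_nonneg_of_lt htarget_gain ((div_lt_iff₀' hT2).1 h)

/-- **Model Insertion Efficiency (three-model case).**
If either `T2'/T1 < L2'·(1/L1 − 1/L1')` or `T2'/T2 < β·(L2'/L1 − 1)`, then the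
three-model inference time is strictly smaller than the two-model inference time. -/
theorem three_model_faster_than_two_model
    (N T1 T2 T2' β L1 L1' L2' : ℝ)
    (hN : 0 < N) (hT1 : 0 < T1) (hT2 : 0 < T2) (hT2' : 0 < T2') (hβ : 0 < β)
    (hL1 : 0 < L1) (hL1' : 0 < L1') (hL2' : 0 < L2')
    (hord1 : L2' < L1') (hord2 : L1 < L2')
    (hcond : T2' / T1 < L2' * (1 / L1 - 1 / L1') ∨ T2' / T2 < β * (L2' / L1 - 1)) :
    N / L1' * T1 + N / L2' * T2' + β * (N / L2') * T2
      < N / L1 * T1 + β * (N / L1) * T2 :=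
  three_model_faster_than_two_model_general N T1 T2 T2' β L1 L1' L2' hN hT1 hT2 hβ hL1 hL2' hord1
    hord2 hcond
end

section
/- Let p ∈ (0,1] be real and q = 1 − p, and let n ≥ 1 be a natural number. Then the variance of the acceptance length satisfies Var(N) = E[N²] − (E[N])², where E[N] = Σ_{k=1}^{n−1} k·p·q^{k−1} + n·q^{n−1} and E[N²] = Σ_{k=1}^{n−1} k²·p·q^{k−1} + n²·q^{n−1}, and Var(N) = (q − (2n−1)·q^n·(1−q) − q^{2n})/p². -/
open Finset

/-!
Since `P(N > k) = q ^ k` for `k < n`, summation by parts rewrites `E[f(N)]` as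
`∑_{k<n} (f(k+1) - f(k)) q^k` whenever `f 0 = 0`. Thus `p E[N] = p ∑ q^k = 1 - q^n` and
`p² E[N²] = p² ∑ (2k+1) q^k = 1 + q - (2n+1) q^n + (2n-1) q^(n+1)`, and the variance is the
difference of the second and the square of the first, divided by `p²`.
-/

section TailSum

variable {R : Type*} [CommRing R]

theorem sum_Icc_mul_geom_add_eq_sum_range_sub (f : ℕ → R) (hf : f 0 = 0)
    (p q : R) (hq : q = 1 - p) (m : ℕ) :
    ∑ k ∈ Icc 1 m, f k * p * q ^ (k - 1) + f (m + 1) * q ^ m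
      = ∑ k ∈ range (m + 1), (f (k + 1) - f k) * q ^ k := by
  induction m with
  | zero => simp [hf]
  | succ m ih =>
    rw [sum_Icc_succ_top (by omega), sum_range_succ, ← ih, Nat.add_sub_cancel, hq]
    ring

theorem sq_one_sub_mul_sum_range_odd_mul_pow (q : R) (n : ℕ) :
    (1 - q) ^ 2 * ∑ k ∈ range n, (2 * (k : R) + 1) * q ^ k
      = 1 + q - (2 * n + 1) * q ^ n + (2 * n - 1) * q ^ (n + 1) := by
  induction n with
  | zero => simp
  | succ n ih =>
    rw [sum_range_succ, mul_add, ih]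
    push_cast
    ring

end TailSum

theorem acceptance_length_variance_general
    (p : ℝ) (hp0 : 0 < p) (q : ℝ) (hq : q = 1 - p)
    (n : ℕ) (hn : 1 ≤ n) :
    (∑ k ∈ Finset.Icc 1 (n - 1), (k : ℝ) ^ 2 * p * q ^ (k - 1)
        + (n : ℝ) ^ 2 * q ^ (n - 1))
      - (∑ k ∈ Finset.Icc 1 (n - 1), (k : ℝ) * p * q ^ (k - 1)
        + (n : ℝ) * q ^ (n - 1)) ^ 2
      = (q - (2 * (n : ℝ) - 1) * q ^ n * (1 - q) - q ^ (2 * n)) / p ^ 2 := by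
  obtain ⟨m, rfl⟩ : ∃ m, n = m + 1 := ⟨n - 1, by omega⟩
  simp only [Nat.add_sub_cancel]
  have hmean : ∑ k ∈ Icc 1 m, (k : ℝ) * p * q ^ (k - 1) + ((m + 1 : ℕ) : ℝ) * q ^ m
      = ∑ k ∈ range (m + 1), q ^ k := by
    simpa using sum_Icc_mul_geom_add_eq_sum_range_sub (fun k : ℕ ↦ (k : ℝ)) Nat.cast_zero p q hq m
  have hsecond : ∑ k ∈ Icc 1 m, (k : ℝ) ^ 2 * p * q ^ (k - 1) + ((m + 1 : ℕ) : ℝ) ^ 2 * q ^ m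
      = ∑ k ∈ range (m + 1), (2 * (k : ℝ) + 1) * q ^ k := by
    rw [sum_Icc_mul_geom_add_eq_sum_range_sub (fun k : ℕ ↦ (k : ℝ) ^ 2) (by simp) p q hq m]
    refine sum_congr rfl fun k _ ↦ ?_
    push_cast
    ring
  rw [hmean, hsecond, eq_div_iff (by positivity), show p = 1 - q by linarith]
  linear_combination sq_one_sub_mul_sum_range_odd_mul_pow q (m + 1)
    - ((1 - q) * ∑ k ∈ range (m + 1), q ^ k + 1 - q ^ (m + 1)) * mul_neg_geom_sum q (m + 1)

/-- **Sampling Stability theorem**: the variance of the capped acceptance length,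
`Var(N) = E[N²] − (E[N])²` with
`E[N] = Σ_{k=1}^{n−1} k·p·q^{k−1} + n·q^{n−1}` and
`E[N²] = Σ_{k=1}^{n−1} k²·p·q^{k−1} + n²·q^{n−1}`, satisfies
`Var(N) = (q − (2n−1)·q^n·(1−q) − q^{2n})/p²`, where `q = 1 − p`. -/
theorem acceptance_length_variance
    (p : ℝ) (hp0 : 0 < p) (hp1 : p ≤ 1) (q : ℝ) (hq : q = 1 - p)
    (n : ℕ) (hn : 1 ≤ n) :
    (∑ k ∈ Finset.Icc 1 (n - 1), (k : ℝ) ^ 2 * p * q ^ (k - 1)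
        + (n : ℝ) ^ 2 * q ^ (n - 1))
      - (∑ k ∈ Finset.Icc 1 (n - 1), (k : ℝ) * p * q ^ (k - 1)
        + (n : ℝ) * q ^ (n - 1)) ^ 2
      = (q - (2 * (n : ℝ) - 1) * q ^ n * (1 - q) - q ^ (2 * n)) / p ^ 2 :=
  acceptance_length_variance_general p hp0 q hq n hn
end
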